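/- Let (Ω, ℱ, P) be a probability space and let (A_k)_{k≥1} be a sequence of events. Let Φ : ℕ → ℕ be non-decreasing with ∑_{k=1}^{Φ(n)} P(A_k) ≥ n for every n ≥ 1. Let L ≥ 0 be an integer and let α⋆ ≥ 0 be such that for every k ≥ 1, every event C in σ(A₁, …, A_k), and every event B in σ(A_j : j ≥ k+L+1), one has |P(C ∩ B) − P(C)·P(B)| ≤ α⋆. Then for all integers n ≥ 1 and i ≥ 0, setting M_{i,n} := Φ(i+n) − i, one has P(⋃_{k=i+1}^{Φ(i+n)} A_k) ≥ 1 − exp(−n/(L+1)) − ⌈M_{i,n}/(L+1)⌉·α⋆. -/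

import Mathlib

/-!
Split the window `(i, Φ (i + n)]`, which carries mass at least `n`, into its `L + 1` residue
classes mod `L + 1`; one class `S` carries mass at least `n / (L + 1)`, its indices are `L + 1`
apart, and it has at most `⌈M / (L + 1)⌉` elements. Peeling off the largest index of `S` one at a
time, mixing costs `α` per step, so `P(⋂_{k ∈ S} A kᶜ) ≤ ∏_{k ∈ S} (1 - P(A k)) + |S| α`, and
`1 - x ≤ exp (-x)` bounds the product by `exp (-n / (L + 1))`.
-/

open MeasureTheory Finset

def IsAlphaMixingAtLag {Ω : Type*} [MeasurableSpace Ω] (P : Measure Ω) (A : ℕ → Set Ω)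
    (L : ℕ) (α : ℝ) : Prop :=
  ∀ k, 1 ≤ k →
    ∀ C : Set Ω, MeasurableSet[MeasurableSpace.generateFrom (A '' Set.Icc 1 k)] C →
    ∀ B : Set Ω, MeasurableSet[MeasurableSpace.generateFrom (A '' Set.Ici (k + L + 1))] B →
      |(P (C ∩ B)).toReal - (P C).toReal * (P B).toReal| ≤ α

section Mixing

variable {Ω : Type*} [MeasurableSpace Ω] {P : Measure Ω} [IsProbabilityMeasure P]
  {A : ℕ → Set Ω} {L : ℕ} {α : ℝ}

lemma IsAlphaMixingAtLag.measureReal_inter_compl_le (hmix : IsAlphaMixingAtLag P A L α)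
    {m a : ℕ} (hm : 1 ≤ m) (hma : m + L + 1 ≤ a) (hAa : MeasurableSet (A a)) {C : Set Ω}
    (hC : MeasurableSet[MeasurableSpace.generateFrom (A '' Set.Icc 1 m)] C) :
    P.real (C ∩ (A a)ᶜ) ≤ P.real C * (1 - P.real (A a)) + α := by
  have hB : MeasurableSet[MeasurableSpace.generateFrom (A '' Set.Ici (m + L + 1))] (A a)ᶜ :=
    (MeasurableSpace.measurableSet_generateFrom (Set.mem_image_of_mem A hma)).compl
  have hcov := (abs_le.mp (hmix m hm C hC _ hB)).2
  rw [← probReal_compl_eq_one_sub hAa]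
  simp only [measureReal_def]
  linarith

lemma IsAlphaMixingAtLag.measureReal_biInter_compl_le (hmix : IsAlphaMixingAtLag P A L α)
    (hα : 0 ≤ α) (hA : ∀ k, 1 ≤ k → MeasurableSet (A k)) (S : Finset ℕ)
    (hS : ∀ k ∈ S, 1 ≤ k) (hsep : ∀ j ∈ S, ∀ k ∈ S, j < k → j + L + 1 ≤ k) :
    P.real (⋂ k ∈ S, (A k)ᶜ) ≤ ∏ k ∈ S, (1 - P.real (A k)) + #S * α := by
  induction S using Finset.induction_on_max with
  | empty => simp
  | insert a s hlt ih =>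
    have has : a ∉ s := fun h => (hlt a h).false
    have hAa : MeasurableSet (A a) := hA a (hS a (mem_insert_self a s))
    have hstep : P.real ((⋂ k ∈ s, (A k)ᶜ) ∩ (A a)ᶜ) ≤
        P.real (⋂ k ∈ s, (A k)ᶜ) * (1 - P.real (A a)) + α := by
      rcases s.eq_empty_or_nonempty with rfl | hs
      · simp [probReal_compl_eq_one_sub hAa, hα]
      · have hmax := s.max'_mem hs
        refine hmix.measureReal_inter_compl_le (hS _ (mem_insert_of_mem hmax))
          (hsep _ (mem_insert_of_mem hmax) a (mem_insert_self a s) (hlt _ hmax)) hAa ?_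
        exact s.measurableSet_biInter fun k hk => (MeasurableSpace.measurableSet_generateFrom
          (Set.mem_image_of_mem A (Set.mem_Icc.mpr ⟨hS k (mem_insert_of_mem hk), s.le_max' k hk⟩))).compl
    have ih := ih (fun k hk => hS k (mem_insert_of_mem hk))
      (fun j hj k hk => hsep j (mem_insert_of_mem hj) k (mem_insert_of_mem hk))
    have hpa : 0 ≤ 1 - P.real (A a) := sub_nonneg.mpr measureReal_le_one
    rw [set_biInter_insert, Set.inter_comm, prod_insert has, card_insert_of_notMem has]
    calc P.real ((⋂ k ∈ s, (A k)ᶜ) ∩ (A a)ᶜ)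
        ≤ (∏ k ∈ s, (1 - P.real (A k)) + #s * α) * (1 - P.real (A a)) + α := by
          grw [hstep, ih]
      _ ≤ (1 - P.real (A a)) * ∏ k ∈ s, (1 - P.real (A k)) + ↑(#s + 1) * α := by
          push_cast
          nlinarith [mul_nonneg (Nat.cast_nonneg (α := ℝ) #s) hα,
            measureReal_nonneg (μ := P) (s := A a)]

lemma prod_one_sub_le_exp_neg_sum {ι : Type*} (s : Finset ι) (p : ι → ℝ)
    (hp : ∀ i ∈ s, p i ≤ 1) : ∏ i ∈ s, (1 - p i) ≤ Real.exp (-∑ i ∈ s, p i) := by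
  rw [← sum_neg_distrib, Real.exp_sum]
  exact prod_le_prod (fun i hi => sub_nonneg.mpr (hp i hi)) fun i _ => Real.one_sub_le_exp_neg _

lemma IsAlphaMixingAtLag.sub_le_measureReal_biUnion (hmix : IsAlphaMixingAtLag P A L α)
    (hα : 0 ≤ α) (hA : ∀ k, 1 ≤ k → MeasurableSet (A k)) (S : Finset ℕ)
    (hS : ∀ k ∈ S, 1 ≤ k) (hsep : ∀ j ∈ S, ∀ k ∈ S, j < k → j + L + 1 ≤ k) :
    1 - Real.exp (-∑ k ∈ S, P.real (A k)) - #S * α ≤ P.real (⋃ k ∈ S, A k) := by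
  have hU : MeasurableSet (⋃ k ∈ S, A k) := S.measurableSet_biUnion fun k hk => hA k (hS k hk)
  have hinter := hmix.measureReal_biInter_compl_le hα hA S hS hsep
  have hprod := prod_one_sub_le_exp_neg_sum S (fun k => P.real (A k)) fun k _ => measureReal_le_one
  rw [← Set.compl_iUnion₂, probReal_compl_eq_one_sub hU] at hinter
  linarith

end Mixing

lemma exists_separated_subset_le_sum (a b L : ℕ) (w : ℕ → ℝ) :
    ∃ S ⊆ Icc (a + 1) b, (∀ j ∈ S, ∀ k ∈ S, j < k → j + L + 1 ≤ k) ∧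
      (∑ k ∈ Icc (a + 1) b, w k) / (L + 1) ≤ ∑ k ∈ S, w k := by
  obtain ⟨r, -, hr⟩ := exists_le_sum_fiber_of_maps_to_of_nsmul_le_sum
    (f := fun k => k % (L + 1)) (t := range (L + 1)) (w := w)
    (b := (∑ k ∈ Icc (a + 1) b, w k) / (L + 1))
    (fun k _ => mem_range.mpr (Nat.mod_lt _ L.succ_pos)) nonempty_range_add_one
    (by rw [card_range, nsmul_eq_mul]; push_cast; rw [mul_div_cancel₀ _ (by positivity)])
  refine ⟨_, filter_subset _ _, fun j hj k hk hjk => ?_, hr⟩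
  have hjk' : j ≡ k [MOD L + 1] := (mem_filter.mp hj).2.trans (mem_filter.mp hk).2.symm
  simpa [add_assoc] using hjk'.add_le_of_lt hjk

lemma card_le_ceil_div_of_separated {S : Finset ℕ} {a b L : ℕ} (hS : S ⊆ Icc (a + 1) b)
    (hsep : ∀ j ∈ S, ∀ k ∈ S, j < k → j + L + 1 ≤ k) :
    #S ≤ ⌈((b - a : ℕ) : ℝ) / ((L : ℝ) + 1)⌉₊ := by
  set q : ℕ → ℕ := fun k => (k - (a + 1)) / (L + 1)
  have hmaps : Set.MapsTo q S (range ⌈((b - a : ℕ) : ℝ) / ((L : ℝ) + 1)⌉₊) := fun k hk => by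
    have hk := mem_Icc.mp (hS hk)
    have hq : q k * (L + 1) < b - a := (Nat.div_mul_le_self _ _).trans_lt (by omega)
    rw [coe_range, Set.mem_Iio, Nat.lt_ceil, lt_div_iff₀ (by positivity)]
    exact_mod_cast hq
  have hmono : StrictMonoOn q S := fun j hj k hk hjk => by
    have hgap := hsep j hj k hk hjk
    have hj := mem_Icc.mp (hS hj)
    calc q j < (j - (a + 1)) / (L + 1) + 1 := lt_add_one _
      _ = (j - (a + 1) + (L + 1)) / (L + 1) := (Nat.add_div_right _ L.succ_pos).symm
      _ ≤ q k := Nat.div_le_div_right (by omega)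
  simpa using card_le_card_of_injOn q hmaps hmono.injOn

lemma le_sum_Icc_add_one_sub {w : ℕ → ℝ} (hw0 : ∀ k, 0 ≤ w k) (hw1 : ∀ k, w k ≤ 1) (a b : ℕ) :
    ∑ k ∈ Icc 1 b, w k - a ≤ ∑ k ∈ Icc (a + 1) b, w k := by
  have hdisj : Disjoint (Icc 1 a) (Icc (a + 1) b) :=
    disjoint_left.mpr fun k h1 h2 => by simp only [mem_Icc] at h1 h2; omega
  have hhead : ∑ k ∈ Icc 1 a, w k ≤ a := by
    simpa using sum_le_card_nsmul (Icc 1 a) w 1 fun k _ => hw1 k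
  have hcover : ∑ k ∈ Icc 1 b, w k ≤ ∑ k ∈ Icc 1 a ∪ Icc (a + 1) b, w k :=
    sum_le_sum_of_subset_of_nonneg (fun k hk => by simp only [mem_union, mem_Icc] at hk ⊢; omega)
      fun k _ _ => hw0 k
  rw [sum_union hdisj] at hcover
  linarith

theorem alpha_mixing_window_bound_general
    {Ω : Type*} [MeasurableSpace Ω] (P : Measure Ω) [IsProbabilityMeasure P]
    (A : ℕ → Set Ω) (hA : ∀ k, 1 ≤ k → MeasurableSet (A k))
    (Φ : ℕ → ℕ)
    (hmass : ∀ n : ℕ, 1 ≤ n → (n : ℝ) ≤ ∑ k ∈ Finset.Icc 1 (Φ n), (P (A k)).toReal)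
    (L : ℕ) (αs : ℝ) (hαs : 0 ≤ αs)
    (hmix : ∀ k, 1 ≤ k →
      ∀ C : Set Ω,
        MeasurableSet[MeasurableSpace.generateFrom (A '' Set.Icc 1 k)] C →
      ∀ B : Set Ω,
        MeasurableSet[MeasurableSpace.generateFrom (A '' Set.Ici (k + L + 1))] B →
          |(P (C ∩ B)).toReal - (P C).toReal * (P B).toReal| ≤ αs) :
    ∀ n : ℕ, 1 ≤ n → ∀ i : ℕ,
      1 - Real.exp (-(n : ℝ) / ((L : ℝ) + 1)) -
          (⌈((Φ (i + n) - i : ℕ) : ℝ) / ((L : ℝ) + 1)⌉₊ : ℝ) * αs ≤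
        (P (⋃ k ∈ Finset.Icc (i + 1) (Φ (i + n)), A k)).toReal := by
  intro n hn i
  obtain ⟨S, hSwin, hsep, hheavy⟩ :=
    exists_separated_subset_le_sum i (Φ (i + n)) L fun k => P.real (A k)
  have hwin : (n : ℝ) ≤ ∑ k ∈ Icc (i + 1) (Φ (i + n)), P.real (A k) := by
    have hmass := hmass (i + n) (by omega)
    have hhead := le_sum_Icc_add_one_sub (w := fun k => P.real (A k))
      (fun _ => measureReal_nonneg) (fun _ => measureReal_le_one) i (Φ (i + n))
    simp only [Nat.cast_add, ← measureReal_def] at hmass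
    linarith
  have hS1 : ∀ k ∈ S, 1 ≤ k := fun k hk => by have := mem_Icc.mp (hSwin hk); omega
  calc 1 - Real.exp (-(n : ℝ) / ((L : ℝ) + 1)) -
          (⌈((Φ (i + n) - i : ℕ) : ℝ) / ((L : ℝ) + 1)⌉₊ : ℝ) * αs
      ≤ 1 - Real.exp (-∑ k ∈ S, P.real (A k)) - #S * αs := by
        rw [neg_div]
        gcongr
        · exact (div_le_div_of_nonneg_right hwin (by positivity)).trans hheavy
        · exact_mod_cast card_le_ceil_div_of_separated hSwin hsep
    _ ≤ P.real (⋃ k ∈ S, A k) :=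
        IsAlphaMixingAtLag.sub_le_measureReal_biUnion hmix hαs hA S hS1 hsep
    _ ≤ P.real (⋃ k ∈ Icc (i + 1) (Φ (i + n)), A k) :=
        measureReal_mono (Set.biUnion_subset_biUnion_left (by exact_mod_cast hSwin))
          (measure_ne_top _ _)

/-- Corollary (finite-window rate form, α-mixing case): if `Φ` is non-decreasing with
`∑_{k=1}^{Φ n} P(A k) ≥ n` for all `n ≥ 1` and the sequence is α-mixing at lag `L + 1`
with coefficient at most `αs`, then for `n ≥ 1`, `i ≥ 0`, with `M = Φ(i+n) − i`,
`P(⋃_{k=i+1}^{Φ(i+n)} A k) ≥ 1 − exp(−n/(L+1)) − ⌈M/(L+1)⌉·αs`. -/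
theorem alpha_mixing_window_bound
    {Ω : Type*} [MeasurableSpace Ω] (P : Measure Ω) [IsProbabilityMeasure P]
    (A : ℕ → Set Ω) (hA : ∀ k, 1 ≤ k → MeasurableSet (A k))
    (Φ : ℕ → ℕ) (hΦ : Monotone Φ)
    (hmass : ∀ n : ℕ, 1 ≤ n → (n : ℝ) ≤ ∑ k ∈ Finset.Icc 1 (Φ n), (P (A k)).toReal)
    (L : ℕ) (αs : ℝ) (hαs : 0 ≤ αs)
    (hmix : ∀ k, 1 ≤ k →
      ∀ C : Set Ω,
        MeasurableSet[MeasurableSpace.generateFrom (A '' Set.Icc 1 k)] C →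
      ∀ B : Set Ω,
        MeasurableSet[MeasurableSpace.generateFrom (A '' Set.Ici (k + L + 1))] B →
          |(P (C ∩ B)).toReal - (P C).toReal * (P B).toReal| ≤ αs) :
    ∀ n : ℕ, 1 ≤ n → ∀ i : ℕ,
      1 - Real.exp (-(n : ℝ) / ((L : ℝ) + 1)) -
          (⌈((Φ (i + n) - i : ℕ) : ℝ) / ((L : ℝ) + 1)⌉₊ : ℝ) * αs ≤
        (P (⋃ k ∈ Finset.Icc (i + 1) (Φ (i + n)), A k)).toReal :=
  alpha_mixing_window_bound_general P A hA Φ hmass L αs hαs hmix
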